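/- Let (e₁,…,e₆) be the standard basis of ℂ⁶, ν = e₁∧e₂∧e₃∧e₄∧e₅∧e₆ ∈ Λ⁶ℂ⁶, and let Ω be the bilinear form on Λ³ℂ⁶ determined by v ∧ w = Ω(v,w)·ν. Then the subspace T := span{eᵢ∧eⱼ∧eₖ : i<j<k, #({i,j,k} ∩ {1,2,3}) ≥ 2} of Λ³ℂ⁶ is 10-dimensional and totally isotropic for Ω, i.e., Ω(v,w) = 0 for all v, w ∈ T. (T is the tangent space at e₁∧e₂∧e₃ to the cone of nonzero decomposable 3-vectors in Λ³ℂ⁶; hence this cone is Lagrangian for the symplectic form Ω.) -/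

import Mathlib

/-!
STATEMENT 14: Let `(e₁,…,e₆)` be the standard basis of `ℂ⁶`, `ν = e₁∧⋯∧e₆ ∈ Λ⁶ℂ⁶`,
and let `Ω` be the bilinear form on `Λ³ℂ⁶` determined by `v ∧ w = Ω(v,w)·ν`.
Then the subspace `T = span{eᵢ∧eⱼ∧eₖ : i<j<k, #({i,j,k} ∩ {1,2,3}) ≥ 2}` of `Λ³ℂ⁶`
is 10-dimensional and totally isotropic for `Ω`.
(Indices are shifted to `0,…,5`; `Λ•ℂ⁶` is realised inside the exterior algebra of `ℂ⁶`,
with wedge product the algebra multiplication.)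
-/

noncomputable section

namespace Stmt14

abbrev A := ExteriorAlgebra ℂ (Fin 6 → ℂ)

/-- The basis vectors `eᵢ` of `ℂ⁶` inside the exterior algebra. -/
def e (i : Fin 6) : A := ExteriorAlgebra.ι ℂ (Pi.single i (1 : ℂ))

/-- `ν = e₁∧e₂∧e₃∧e₄∧e₅∧e₆`. -/
def ν : A := e 0 * e 1 * e 2 * e 3 * e 4 * e 5

/-- The span `T` of the decomposable three-vectors `eᵢ∧eⱼ∧eₖ`, `i<j<k`, with at least two
indices among `{1,2,3}` (i.e. `{0,1,2}` in shifted indexing). -/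
def T : Submodule ℂ A :=
  Submodule.span ℂ
    {x : A | ∃ i j k : Fin 6, i < j ∧ j < k ∧
      2 ≤ (({i, j, k} : Finset (Fin 6)) ∩ ({0, 1, 2} : Finset (Fin 6))).card ∧
      x = e i * e j * e k}

end Stmt14

/-!
With respect to the standard basis, the products `eᵢ ∧ eⱼ ∧ eₖ` with `i < j < k` are the basis
vectors of the exterior algebra indexed by the `3`-subsets `{i, j, k}`, so `T` is spanned by ten
distinct basis vectors. Two admissible index sets each contain at least two of the three indices
`0, 1, 2`, so they intersect and the product of the corresponding basis vectors vanishes. Hence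
`v ∧ w = 0` for all `v, w ∈ T`, and `Ω(v, w) = 0` because `ν ≠ 0`.
-/

open Finset
open scoped Pointwise

lemma Finset.not_disjoint_of_card_lt_card_inter_add_card_inter {α : Type*} [DecidableEq α]
    {s t u : Finset α} (h : #u < #(s ∩ u) + #(t ∩ u)) : ¬Disjoint s t := by
  obtain ⟨a, ha⟩ := inter_nonempty_of_card_lt_card_add_card inter_subset_right inter_subset_right h
  simp only [mem_inter] at ha
  exact not_disjoint_iff.2 ⟨a, ha.1.1, ha.2.1⟩

lemma Submodule.mul_eq_zero_of_mem_span {R A : Type*} [CommSemiring R] [Semiring A] [Algebra R A]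
    {X : Set A} (hX : ∀ x ∈ X, ∀ y ∈ X, x * y = 0) {x y : A}
    (hx : x ∈ span R X) (hy : y ∈ span R X) : x * y = 0 := by
  have hXX : span R (X * X) = ⊥ := by
    rw [span_eq_bot]
    rintro _ ⟨x, hx, y, hy, rfl⟩
    exact hX x hx y hy
  simpa [span_mul_span, hXX] using mul_mem_mul hx hy

lemma Module.Basis.finrank_span_image_finset {K V ι : Type*} [Field K] [AddCommGroup V]
    [Module K V] (b : Basis ι K V) (S : Finset ι) :
    finrank K (Submodule.span K (b '' S)) = #S := by
  have hli : LinearIndependent K (b ∘ ((↑) : ↥(S : Set ι) → ι)) :=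
    b.linearIndependent.comp _ Subtype.val_injective
  rw [← Subtype.range_coe (s := (S : Set ι)), ← Set.range_comp, finrank_span_eq_card hli]
  simp

namespace ExteriorAlgebra

open Module

variable {R M I : Type*} [CommRing R] [AddCommGroup M] [Module R M] [LinearOrder I]
  (b : Basis I R M)

lemma ιMulti_fin_three (v : Fin 3 → M) :
    ιMulti R 3 v = ι R (v 0) * ι R (v 1) * ι R (v 2) := by
  simp [ιMulti_apply, mul_assoc, Matrix.vecTail]

lemma basis_apply_eq_ιMulti {s : Finset I} {n : ℕ} (h : #s = n) :
    b.ExteriorAlgebra s = ιMulti R n (b ∘ s.orderEmbOfFin h) := by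
  rw [basis_apply_ofCard b h]
  rfl

lemma basis_univ_fin {n : ℕ} (b : Basis (Fin n) R M) :
    b.ExteriorAlgebra univ = ιMulti R n b := by
  rw [basis_apply_eq_ιMulti b (card_fin n),
    ← orderEmbOfFin_unique (card_fin n) (fun _ => mem_univ _) strictMono_id]
  rfl

lemma basis_eq_ι_mul_ι_mul_ι {i j k : I} (hij : i < j) (hjk : j < k) :
    b.ExteriorAlgebra {i, j, k} = ι R (b i) * ι R (b j) * ι R (b k) := by
  have hcard : #{i, j, k} = 3 :=
    card_eq_three.2 ⟨i, j, k, hij.ne, (hij.trans hjk).ne, hjk.ne, rfl⟩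
  have hmono : StrictMono ![i, j, k] := by
    refine Fin.strictMono_iff_lt_succ.2 fun a => ?_
    fin_cases a <;> simpa
  rw [basis_apply_eq_ιMulti b hcard,
    ← orderEmbOfFin_unique hcard (by simp [Fin.forall_fin_succ]) hmono, ιMulti_fin_three]
  rfl

lemma image_basis_setOf_card_eq_three (P : Finset I → Prop) :
    b.ExteriorAlgebra '' {s | #s = 3 ∧ P s} =
      {x | ∃ i j k, i < j ∧ j < k ∧ P {i, j, k} ∧ x = ι R (b i) * ι R (b j) * ι R (b k)} := by
  ext x
  constructor
  · rintro ⟨s, ⟨hs, hP⟩, rfl⟩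
    set f := s.orderEmbOfFin hs
    have hs' : s = {f 0, f 1, f 2} :=
      calc s = image f univ := (image_orderEmbOfFin_univ s hs).symm
        _ = {f 0, f 1, f 2} := by ext; simp [Fin.exists_fin_succ, eq_comm]
    refine ⟨f 0, f 1, f 2, f.strictMono (by decide), f.strictMono (by decide), hs' ▸ hP, ?_⟩
    rw [basis_apply_eq_ιMulti b hs, ιMulti_fin_three]
    rfl
  · rintro ⟨i, j, k, hij, hjk, hP, rfl⟩
    refine ⟨{i, j, k}, ⟨?_, hP⟩, basis_eq_ι_mul_ι_mul_ι b hij hjk⟩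
    exact card_eq_three.2 ⟨i, j, k, hij.ne, (hij.trans hjk).ne, hjk.ne, rfl⟩

lemma basis_mul_basis_of_not_disjoint {s t : Finset I} (h : ¬Disjoint s t) :
    b.ExteriorAlgebra s * b.ExteriorAlgebra t = 0 :=
  basis_mul_of_not_disjoint b (Set.powersetCard.ofCard rfl) (Set.powersetCard.ofCard rfl) h

lemma basis_mem_exteriorPower {s : Finset I} {n : ℕ} (h : #s = n) :
    b.ExteriorAlgebra s ∈ ⋀[R]^n M := by
  rw [basis_apply_eq_ιMulti b h]
  exact ιMulti_range R n ⟨_, rfl⟩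

end ExteriorAlgebra

namespace Stmt14

open ExteriorAlgebra

def tangentIndices : Finset (Finset (Fin 6)) := {s | #s = 3 ∧ 2 ≤ #(s ∩ {0, 1, 2})}

lemma card_tangentIndices : #tangentIndices = 10 := by decide

lemma T_eq_span_basis :
    T = Submodule.span ℂ ((Pi.basisFun ℂ (Fin 6)).ExteriorAlgebra '' tangentIndices) := by
  rw [T, tangentIndices, coe_filter_univ, image_basis_setOf_card_eq_three]
  simp [e]

lemma ν_eq_basis_univ : ν = (Pi.basisFun ℂ (Fin 6)).ExteriorAlgebra univ := by
  rw [basis_univ_fin]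
  simp [ν, e, ιMulti_apply, mul_assoc, Matrix.vecTail]

lemma T_le_exteriorPower : T ≤ ⋀[ℂ]^3 (Fin 6 → ℂ) := by
  rw [T_eq_span_basis, Submodule.span_le]
  rintro _ ⟨s, hs, rfl⟩
  simp only [tangentIndices, mem_coe, mem_filter_univ] at hs
  exact basis_mem_exteriorPower _ hs.1

lemma mul_eq_zero_of_mem_T {v w : A} (hv : v ∈ T) (hw : w ∈ T) : v * w = 0 := by
  rw [T_eq_span_basis] at hv hw
  refine Submodule.mul_eq_zero_of_mem_span ?_ hv hw
  rintro _ ⟨s, hs, rfl⟩ _ ⟨t, ht, rfl⟩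
  simp only [tangentIndices, mem_coe, mem_filter_univ] at hs ht
  refine basis_mul_basis_of_not_disjoint _
    (not_disjoint_of_card_lt_card_inter_add_card_inter (u := {0, 1, 2}) ?_)
  have : #({0, 1, 2} : Finset (Fin 6)) = 3 := rfl
  omega

end Stmt14

open Stmt14 in
theorem stmt14 :
    -- `T` is a 10-dimensional subspace of `Λ³ℂ⁶`
    Module.finrank ℂ T = 10 ∧
    T ≤ ⋀[ℂ]^3 (Fin 6 → ℂ) ∧
    -- `T` is totally isotropic for the symplectic form `Ω` defined by `v ∧ w = Ω(v,w)·ν`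
    (∀ Ω : A → A → ℂ,
      (∀ v w : A, v ∈ ⋀[ℂ]^3 (Fin 6 → ℂ) → w ∈ ⋀[ℂ]^3 (Fin 6 → ℂ) →
        v * w = Ω v w • ν) →
      ∀ v w : A, v ∈ T → w ∈ T → Ω v w = 0) := by
  refine ⟨?_, T_le_exteriorPower, fun Ω hΩ v w hv hw => ?_⟩
  · rw [T_eq_span_basis, Module.Basis.finrank_span_image_finset, card_tangentIndices]
  · have hν : ν ≠ 0 := ν_eq_basis_univ ▸ Module.Basis.ne_zero _ _
    have h := hΩ v w (T_le_exteriorPower hv) (T_le_exteriorPower hw)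
    rw [mul_eq_zero_of_mem_T hv hw, eq_comm, smul_eq_zero] at h
    exact h.resolve_right hν
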